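/- If A is a right hereditary, right noetherian ring and A → R a ring homomorphism, then the canonical map ζ : R° → R* from the finite dual coring to the right dual of R is injective. -/

import Mathlib

open MulOpposite

universe u

variable (A R : Type u) [Ring A] [Ring R] (φ : A →+* R)

/-- An object of the category `𝒜_R`: a right `R`-module (encoded as a module
over `Rᵐᵒᵖ`) which, via restriction of scalars along `φ`, is finitely generated
and projective as a right `A`-module. -/
structure FDObj : Type (u + 1) where
  carrier : Type u
  [acg : AddCommGroup carrier]
  [modR : Module Rᵐᵒᵖ carrier]
  [modA : Module Aᵐᵒᵖ carrier]
  compat : ∀ (a : Aᵐᵒᵖ) (x : carrier), a • x = (RingHom.op φ a) • x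
  fin : Module.Finite Aᵐᵒᵖ carrier
  proj : Module.Projective Aᵐᵒᵖ carrier

attribute [instance] FDObj.acg FDObj.modR FDObj.modA

variable {A R φ}

/-- The right `A`-linear dual of an object `P` of `𝒜_R`. -/
abbrev FDObj.dual (P : FDObj A R φ) : Type u := P.carrier →ₗ[Aᵐᵒᵖ] A

/-- Composition of a dual element with a right `R`-linear map, `q* ↦ q* ∘ t`. -/
def FDObj.compDual {P Q : FDObj A R φ} (t : P.carrier →ₗ[Rᵐᵒᵖ] Q.carrier)
    (g : Q.dual) : P.dual where
  toFun := fun p => g (t p)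
  map_add' := by intro p q; simp
  map_smul' := by
    intro a p
    simp only [RingHom.id_apply]
    rw [P.compat a p, map_smul, ← Q.compat a (t p), map_smul]

variable (A R φ)

/-- Generators of the finite dual: triples `(P, p*, p)`. -/
def FDGen : Type (u + 1) := Σ P : FDObj A R φ, P.dual × P.carrier

/-- The relations defining the finite dual coring `R°`: additivity in each tensor slot
(yielding the tensor products `P* ⊗_{T_P} P`) together with the relations
`q* ⊗ t·p − q*·t ⊗ p` for right `R`-linear maps `t : P → Q`. -/
def FDRel : Set (FreeAbelianGroup (FDGen A R φ)) :=
  { x | (∃ (P : FDObj A R φ) (f g : P.dual) (p : P.carrier),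
          x = FreeAbelianGroup.of ⟨P, (f + g, p)⟩
              - FreeAbelianGroup.of ⟨P, (f, p)⟩ - FreeAbelianGroup.of ⟨P, (g, p)⟩) ∨
        (∃ (P : FDObj A R φ) (f : P.dual) (p q : P.carrier),
          x = FreeAbelianGroup.of ⟨P, (f, p + q)⟩
              - FreeAbelianGroup.of ⟨P, (f, p)⟩ - FreeAbelianGroup.of ⟨P, (f, q)⟩) ∨
        (∃ (P Q : FDObj A R φ) (t : P.carrier →ₗ[Rᵐᵒᵖ] Q.carrier)
            (g : Q.dual) (p : P.carrier),
          x = FreeAbelianGroup.of ⟨Q, (g, t p)⟩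
              - FreeAbelianGroup.of ⟨P, (FDObj.compDual t g, p)⟩) }

/-- The right finite dual `R°` of the ring extension `φ : A → R`, as an abelian group. -/
def FinDual : Type (u + 1) :=
  FreeAbelianGroup (FDGen A R φ) ⧸ AddSubgroup.closure (FDRel A R φ)

noncomputable instance : AddCommGroup (FinDual A R φ) :=
  QuotientAddGroup.Quotient.addCommGroup _

/-- The right `A`-linear dual `R* = Hom_A(R, A)` of `R` (as a right `A`-module via `φ`),
realized as the additive subgroup of `R →+ A` of right `A`-linear maps. -/
def RStar : AddSubgroup (R →+ A) where
  carrier := { f | ∀ (r : R) (a : A), f (r * φ a) = f r * a }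
  add_mem' := by
    intro f g hf hg r a
    simp [hf r a, hg r a, add_mul]
  zero_mem' := by intro r a; simp
  neg_mem' := by
    intro f hf r a
    simp [hf r a, neg_mul]

/-- The functional `ζ(p* ⊗ p) : r ↦ p*(p·r)` attached to a generator. -/
def zetaGen (g : FDGen A R φ) : R →+ A where
  toFun := fun r => g.2.1 ((op r : Rᵐᵒᵖ) • g.2.2)
  map_zero' := by simp
  map_add' := by
    intro r s
    show g.2.1 ((op (r + s) : Rᵐᵒᵖ) • g.2.2) = _
    rw [op_add, add_smul, map_add]

lemma zetaGen_mem (g : FDGen A R φ) : zetaGen A R φ g ∈ RStar A R φ := by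
  intro r a
  have h1 : (op (r * φ a) : Rᵐᵒᵖ) = (RingHom.op φ (op a)) * op r := rfl
  have h2 : ((RingHom.op φ (op a)) * op r) • g.2.2
      = (RingHom.op φ (op a)) • ((op r : Rᵐᵒᵖ) • g.2.2) := mul_smul _ _ _
  have h3 : (RingHom.op φ (op a)) • ((op r : Rᵐᵒᵖ) • g.2.2)
      = (op a : Aᵐᵒᵖ) • ((op r : Rᵐᵒᵖ) • g.2.2) := (g.1.compat (op a) _).symm
  show g.2.1 ((op (r * φ a) : Rᵐᵒᵖ) • g.2.2) = g.2.1 ((op r : Rᵐᵒᵖ) • g.2.2) * a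
  rw [h1, h2, h3, map_smul]
  rfl

/-- `ζ` on the free abelian group on generators. -/
noncomputable def zetaHat : FreeAbelianGroup (FDGen A R φ) →+ ↥(RStar A R φ) :=
  FreeAbelianGroup.lift (fun g => ⟨zetaGen A R φ g, zetaGen_mem A R φ g⟩)

lemma FDRel_le_ker : AddSubgroup.closure (FDRel A R φ) ≤ (zetaHat A R φ).ker := by
  rw [AddSubgroup.closure_le]
  rintro x hx
  simp only [SetLike.mem_coe, AddMonoidHom.mem_ker]
  obtain (⟨P, f, g, p, rfl⟩ | ⟨P, f, p, q, rfl⟩ | ⟨P, Q, t, g, p, rfl⟩) := hx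
  · rw [map_sub, map_sub, sub_sub, sub_eq_zero]
    apply Subtype.ext; apply AddMonoidHom.ext; intro r
    simp only [zetaHat]
    erw [FreeAbelianGroup.lift_apply_of, FreeAbelianGroup.lift_apply_of]
    try erw [FreeAbelianGroup.lift_apply_of]
    simp only [zetaHat, FreeAbelianGroup.lift_apply_of, AddSubgroup.coe_add,
      AddMonoidHom.add_apply, zetaGen, AddMonoidHom.coe_mk, ZeroHom.coe_mk,
      LinearMap.add_apply]
    rfl
  · rw [map_sub, map_sub, sub_sub, sub_eq_zero]
    apply Subtype.ext; apply AddMonoidHom.ext; intro r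
    simp only [zetaHat]
    erw [FreeAbelianGroup.lift_apply_of, FreeAbelianGroup.lift_apply_of]
    try erw [FreeAbelianGroup.lift_apply_of]
    simp only [zetaHat, FreeAbelianGroup.lift_apply_of, AddSubgroup.coe_add,
      AddMonoidHom.add_apply, zetaGen, AddMonoidHom.coe_mk, ZeroHom.coe_mk,
      smul_add, map_add]
    exact map_add f _ _
  · rw [map_sub, sub_eq_zero]
    apply Subtype.ext; apply AddMonoidHom.ext; intro r
    simp only [zetaHat]
    erw [FreeAbelianGroup.lift_apply_of, FreeAbelianGroup.lift_apply_of]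
    try erw [FreeAbelianGroup.lift_apply_of]
    simp only [zetaHat, FreeAbelianGroup.lift_apply_of, zetaGen, AddMonoidHom.coe_mk,
      ZeroHom.coe_mk, FDObj.compDual, LinearMap.coe_mk, AddHom.coe_mk]
    exact congrArg g (t.map_smul (MulOpposite.op r) p).symm

/-- The canonical map `ζ : R° → R*`. -/
noncomputable def zeta : FinDual A R φ →+ ↥(RStar A R φ) :=
  QuotientAddGroup.lift _ (zetaHat A R φ) (FDRel_le_ker A R φ)

/-!
Every element of `R°` is the class of a single tensor `p* ⊗ p`, since a sum of two such tensors
over `P` and `Q` is one tensor over `P × Q`. If `ζ` kills `p* ⊗ p`, then `p*` vanishes on the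
cyclic submodule `pR`. As `A` is right noetherian and right hereditary, `pR ⊆ P` is again finitely
generated projective over `A`, so it is an object, and the relation for the inclusion `pR → P`
turns `p* ⊗ p` into `(p*|pR) ⊗ p = 0`.

Submodules of finitely generated projectives are projective over a right hereditary ring: embed
into `Aⁿ` and split off one coordinate at a time, whose image is a (projective) right ideal.
-/

section Hereditary

variable {B : Type*} [Ring B] {M N : Type*} [AddCommGroup M] [Module B M]
  [AddCommGroup N] [Module B N]

theorem Module.Projective.of_injective_of_forall_submodule
    (hM : ∀ P : Submodule B M, Module.Projective B P) (f : N →ₗ[B] M)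
    (hf : Function.Injective f) : Module.Projective B N :=
  have := hM (LinearMap.range f)
  .of_equiv (LinearEquiv.ofInjective f hf).symm

theorem Module.Projective.of_exact {K I : Type*} [AddCommGroup K] [Module B K]
    [AddCommGroup I] [Module B I] [Module.Projective B K] [Module.Projective B I]
    {f : K →ₗ[B] N} {g : N →ₗ[B] I} (hfg : Function.Exact f g)
    (hf : Function.Injective f) (hg : Function.Surjective g) : Module.Projective B N :=
  have ⟨l, hl⟩ := g.exists_rightInverse_of_surjective (LinearMap.range_eq_top.mpr hg)
  .of_equiv (hfg.splitSurjectiveEquiv hf ⟨l, hl⟩).1.symm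

theorem Module.Projective.submodule_prod
    (hB : ∀ I : Submodule B B, Module.Projective B I)
    (hM : ∀ P : Submodule B M, Module.Projective B P) (P : Submodule B (B × M)) :
    Module.Projective B P := by
  have := hB (LinearMap.range (LinearMap.fst B B M ∘ₗ P.subtype))
  have := hM (P.comap (LinearMap.inr B B M))
  refine .of_exact
    (f := (LinearMap.inr B B M).restrict (p := P.comap (LinearMap.inr B B M)) (q := P)
      fun _ h => h)
    (g := (LinearMap.fst B B M ∘ₗ P.subtype).rangeRestrict) ?_ ?_
    (LinearMap.surjective_rangeRestrict _)
  · rintro ⟨⟨a, m⟩, hx⟩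
    constructor
    · intro h
      obtain rfl : a = 0 := congrArg Subtype.val h
      exact ⟨⟨m, hx⟩, rfl⟩
    · rintro ⟨y, hy⟩
      rw [← hy]
      rfl
  · exact fun x y h => Subtype.ext (LinearMap.inr_injective (congrArg Subtype.val h))

theorem Module.Projective.submodule_pi_fin
    (hB : ∀ I : Submodule B B, Module.Projective B I) :
    ∀ (n : ℕ) (P : Submodule B (Fin n → B)), Module.Projective B P
  | 0, _ => inferInstance
  | n + 1, P => .of_injective_of_forall_submodule
      (submodule_prod hB (submodule_pi_fin hB n))
      ((Fin.consLinearEquiv B fun _ => B).symm.toLinearMap ∘ₗ P.subtype)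
      ((Fin.consLinearEquiv B fun _ => B).symm.injective.comp Subtype.val_injective)

theorem Module.Projective.submodule_of_finite [Module.Finite B M] [Module.Projective B M]
    (hB : ∀ I : Submodule B B, Module.Projective B I) (P : Submodule B M) :
    Module.Projective B P := by
  obtain ⟨n, π, hπ⟩ := Module.Finite.exists_fin' B M
  obtain ⟨σ, hσ⟩ := π.exists_rightInverse_of_surjective (LinearMap.range_eq_top.mpr hπ)
  have hσ_inj : Function.Injective σ :=
    Function.LeftInverse.injective (g := π) (LinearMap.congr_fun hσ)
  exact .of_injective_of_forall_submodule (submodule_pi_fin hB n) (σ ∘ₗ P.subtype)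
    (hσ_inj.comp Subtype.val_injective)

end Hereditary

namespace FDObj

variable {A R φ}

def prod (P Q : FDObj A R φ) : FDObj A R φ where
  carrier := P.carrier × Q.carrier
  compat a x := Prod.ext (P.compat a x.1) (Q.compat a x.2)
  fin := have := P.fin; have := Q.fin; inferInstance
  proj := have := P.proj; have := Q.proj; inferInstance

def fst (P Q : FDObj A R φ) : (P.prod Q).carrier →ₗ[Rᵐᵒᵖ] P.carrier :=
  LinearMap.fst _ _ _

def snd (P Q : FDObj A R φ) : (P.prod Q).carrier →ₗ[Rᵐᵒᵖ] Q.carrier :=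
  LinearMap.snd _ _ _

def punit : FDObj A R φ where
  carrier := PUnit
  compat _ _ := Subsingleton.elim _ _
  fin := inferInstance
  proj := inferInstance

def ofSubmodule (P : FDObj A R φ) [IsNoetherian Aᵐᵒᵖ P.carrier]
    (hP : ∀ Q : Submodule Aᵐᵒᵖ P.carrier, Module.Projective Aᵐᵒᵖ Q)
    (N : Submodule Rᵐᵒᵖ P.carrier) : FDObj A R φ :=
  letI : Module Aᵐᵒᵖ N := Module.compHom N (RingHom.op φ)
  let ι : N →ₗ[Aᵐᵒᵖ] P.carrier :=
    { toFun := Subtype.val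
      map_add' _ _ := rfl
      map_smul' a x := (P.compat a x).symm }
  have := isNoetherian_of_injective ι Subtype.val_injective
  { carrier := N
    compat _ _ := rfl
    fin := inferInstance
    proj := .of_injective_of_forall_submodule hP ι Subtype.val_injective }

end FDObj

namespace FinDual

variable {A R φ}

noncomputable def mk : FreeAbelianGroup (FDGen A R φ) →+ FinDual A R φ :=
  QuotientAddGroup.mk' _

noncomputable def of (P : FDObj A R φ) (f : P.dual) (p : P.carrier) : FinDual A R φ :=
  mk (FreeAbelianGroup.of ⟨P, (f, p)⟩)

theorem mk_surjective : Function.Surjective (mk : _ → FinDual A R φ) :=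
  QuotientAddGroup.mk'_surjective _

theorem mk_eq_zero_of_mem_rel {x : FreeAbelianGroup (FDGen A R φ)} (hx : x ∈ FDRel A R φ) :
    mk x = 0 :=
  (QuotientAddGroup.eq_zero_iff x).mpr (AddSubgroup.subset_closure hx)

theorem of_add_left (P : FDObj A R φ) (f g : P.dual) (p : P.carrier) :
    of P (f + g) p = of P f p + of P g p := by
  have := mk_eq_zero_of_mem_rel (Or.inl ⟨P, f, g, p, rfl⟩)
  rwa [map_sub, map_sub, sub_sub, sub_eq_zero] at this

theorem of_comp {P Q : FDObj A R φ} (t : P.carrier →ₗ[Rᵐᵒᵖ] Q.carrier) (g : Q.dual)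
    (p : P.carrier) : of Q g (t p) = of P (FDObj.compDual t g) p := by
  have := mk_eq_zero_of_mem_rel (Or.inr (Or.inr ⟨P, Q, t, g, p, rfl⟩))
  rwa [map_sub, sub_eq_zero] at this

theorem of_zero_left (P : FDObj A R φ) (p : P.carrier) : of P 0 p = 0 := by
  simpa using of_add_left P 0 0 p

theorem of_neg_left (P : FDObj A R φ) (f : P.dual) (p : P.carrier) :
    of P (-f) p = -of P f p :=
  eq_neg_of_add_eq_zero_left <| by rw [← of_add_left, neg_add_cancel, of_zero_left]

theorem exists_eq_of (x : FinDual A R φ) : ∃ P f p, x = of P f p := by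
  obtain ⟨x, rfl⟩ := mk_surjective x
  induction x using FreeAbelianGroup.induction_on with
  | zero => exact ⟨FDObj.punit, 0, 0, (of_zero_left _ _).symm⟩
  | of g => exact ⟨g.1, g.2.1, g.2.2, rfl⟩
  | neg _ ih =>
    obtain ⟨P, f, p, hx⟩ := ih
    exact ⟨P, -f, p, by rw [of_neg_left, ← hx]; rfl⟩
  | add _ _ ihx ihy =>
    obtain ⟨P, f, p, hx⟩ := ihx
    obtain ⟨Q, g, q, hy⟩ := ihy
    let pq : (P.prod Q).carrier := (p, q)
    have hp : of P f p = of (P.prod Q) (FDObj.compDual (P.fst Q) f) pq := of_comp (P.fst Q) f pq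
    have hq : of Q g q = of (P.prod Q) (FDObj.compDual (P.snd Q) g) pq := of_comp (P.snd Q) g pq
    refine ⟨P.prod Q, FDObj.compDual (P.fst Q) f + FDObj.compDual (P.snd Q) g, pq, ?_⟩
    rw [map_add, hx, hy, hp, hq, of_add_left]

theorem zeta_of_apply (P : FDObj A R φ) (f : P.dual) (p : P.carrier) (r : R) :
    (zeta A R φ (of P f p) : R →+ A) r = f (op r • p) := by
  have hzeta :
      zeta A R φ (of P f p) = ⟨zetaGen A R φ ⟨P, (f, p)⟩, zetaGen_mem A R φ _⟩ :=
    (QuotientAddGroup.lift_mk' _ _ _).trans (FreeAbelianGroup.lift_apply_of _ _)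
  rw [hzeta]
  rfl

theorem of_eq_zero_of_forall_apply_smul_eq_zero {P : FDObj A R φ}
    [IsNoetherian Aᵐᵒᵖ P.carrier] (hP : ∀ Q : Submodule Aᵐᵒᵖ P.carrier, Module.Projective Aᵐᵒᵖ Q)
    {f : P.dual} {p : P.carrier} (hf : ∀ r : R, f (op r • p) = 0) : of P f p = 0 := by
  let D := P.ofSubmodule hP (Submodule.span Rᵐᵒᵖ {p})
  let t : D.carrier →ₗ[Rᵐᵒᵖ] P.carrier := Submodule.subtype _
  have hft : FDObj.compDual t f = 0 := by
    ext ⟨x, hx⟩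
    obtain ⟨r, rfl⟩ := Submodule.mem_span_singleton.mp hx
    exact hf r.unop
  let p' : D.carrier := ⟨p, Submodule.mem_span_singleton_self p⟩
  calc of P f p = of P f (t p') := rfl
    _ = of D (FDObj.compDual t f) p' := of_comp t f p'
    _ = 0 := by rw [hft, of_zero_left]

end FinDual

/-- If `A` is a right hereditary, right noetherian ring (every right ideal
of `A` is projective as a right `A`-module, and `A` is noetherian as a right module over
itself) and `A → R` a ring homomorphism, then the canonical map `ζ : R° → R*` from the
finite dual coring to the right dual of `R` is injective. -/
theorem zeta_injective_of_right_hereditary_noetherian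
    (A R : Type u) [Ring A] [Ring R] (φ : A →+* R)
    (hhered : ∀ I : Submodule Aᵐᵒᵖ A, Module.Projective Aᵐᵒᵖ ↥I)
    (hnoeth : IsNoetherian Aᵐᵒᵖ A) :
    Function.Injective (zeta A R φ) := by
  have : IsNoetherianRing Aᵐᵒᵖ := isNoetherian_of_linearEquiv (opLinearEquiv Aᵐᵒᵖ)
  have hhered_op (I : Submodule Aᵐᵒᵖ Aᵐᵒᵖ) : Module.Projective Aᵐᵒᵖ I :=
    .of_injective_of_forall_submodule hhered
      ((opLinearEquiv Aᵐᵒᵖ).symm.toLinearMap ∘ₗ I.subtype)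
      ((opLinearEquiv Aᵐᵒᵖ).symm.injective.comp Subtype.val_injective)
  refine (injective_iff_map_eq_zero _).mpr fun x hx => ?_
  obtain ⟨P, f, p, rfl⟩ := FinDual.exists_eq_of x
  have := P.fin
  have := P.proj
  have : IsNoetherian Aᵐᵒᵖ P.carrier := isNoetherian_of_isNoetherianRing_of_finite _ _
  refine FinDual.of_eq_zero_of_forall_apply_smul_eq_zero
    (Module.Projective.submodule_of_finite hhered_op) fun r => ?_
  rw [← FinDual.zeta_of_apply, hx]
  rfl
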